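/- arXiv:1711.02936 — 2 statements merged into one kernel-verified Lean document; each statement's English description precedes it below -/
import Mathlib

section
/- If P ⊆ ℝ^d is a polytope (convex hull of a finite set) with 0 in its interior, then its polar dual P^∨ is again a polytope with 0 in its interior. -/
open Set

noncomputable section

/-- Standard dot product on `ℝ^d`. -/
def dotp {d : ℕ} (v x : Fin d → ℝ) : ℝ := ∑ i, v i * x i

/-- Polar dual `P^∨ = {v | ⟨v,x⟩ ≤ 1 ∀ x ∈ P}`. -/
def polarDual {d : ℕ} (P : Set (Fin d → ℝ)) : Set (Fin d → ℝ) :=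
  {v | ∀ x ∈ P, dotp v x ≤ 1}

/-- A point of `ℝ^d` lying in the lattice `ℤ^d`. -/
def IsLatticePt {d : ℕ} (x : Fin d → ℝ) : Prop := ∀ i, ∃ n : ℤ, x i = (n : ℝ)

/-- A polytope: convex hull of finitely many points. -/
def IsPolytope {d : ℕ} (P : Set (Fin d → ℝ)) : Prop :=
  ∃ V : Finset (Fin d → ℝ), P = convexHull ℝ (V : Set (Fin d → ℝ))

/-- A lattice polytope: convex hull of finitely many lattice points. -/
def IsLatticePolytope {d : ℕ} (P : Set (Fin d → ℝ)) : Prop :=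
  ∃ V : Finset (Fin d → ℝ), (∀ x ∈ V, IsLatticePt x) ∧
    P = convexHull ℝ (V : Set (Fin d → ℝ))

/-- `F` is a face of `P`: the subset of `P` where some linear functional bounded
above on `P` attains its maximum. -/
def IsFace {d : ℕ} (P F : Set (Fin d → ℝ)) : Prop :=
  ∃ (c : Fin d → ℝ) (b : ℝ), (∀ x ∈ P, dotp c x ≤ b) ∧ F = {x ∈ P | dotp c x = b}

/-- Dimension of a subset of `ℝ^d` (dimension of its affine hull). -/
def fdim {d : ℕ} (F : Set (Fin d → ℝ)) : ℕ := Module.finrank ℝ (vectorSpan ℝ F)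

/-- A facet is a face of dimension `d - 1`. -/
def IsFacet {d : ℕ} (P F : Set (Fin d → ℝ)) : Prop :=
  IsFace P F ∧ fdim F = d - 1

/-- The lattice `ℤ^d` sitting inside `ℝ^d`, as a `ℤ`-submodule. -/
def latticeSubmodule (d : ℕ) : Submodule ℤ (Fin d → ℝ) :=
  Submodule.span ℤ {x : Fin d → ℝ | IsLatticePt x}

/-- A set of vectors forms a `ℤ`-basis of the lattice `ℤ^d`:
it is `ℝ`-linearly independent and `ℤ`-spans the lattice. -/
def IsLatticeBasisSet {d : ℕ} (S : Set (Fin d → ℝ)) : Prop :=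
  LinearIndependent ℝ (fun v : S => (v : Fin d → ℝ)) ∧
    Submodule.span ℤ S = latticeSubmodule d

/-- A smooth Fano polytope: full-dimensional lattice polytope with `0` in its
interior, such that the vertex set of every facet is a `ℤ`-basis of `ℤ^d`. -/
def IsSmoothFano {d : ℕ} (P : Set (Fin d → ℝ)) : Prop :=
  IsLatticePolytope P ∧ (0 : Fin d → ℝ) ∈ interior P ∧ fdim P = d ∧
    ∀ F, IsFacet P F → IsLatticeBasisSet (Set.extremePoints ℝ F)

/-- A reflexive polytope: full-dimensional lattice polytope with `0` in its
interior whose polar dual is again a lattice polytope. -/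
def IsReflexive {d : ℕ} (P : Set (Fin d → ℝ)) : Prop :=
  IsLatticePolytope P ∧ fdim P = d ∧ (0 : Fin d → ℝ) ∈ interior P ∧
    IsLatticePolytope (polarDual P)

/-- Free sum `P ⊕ Q = conv((P × {0}) ∪ ({0} × Q))`. -/
def freeSum {a b : ℕ} (P : Set (Fin a → ℝ)) (Q : Set (Fin b → ℝ)) :
    Set (Fin (a + b) → ℝ) :=
  convexHull ℝ ((fun v => Fin.append v (0 : Fin b → ℝ)) '' P ∪
    (fun w => Fin.append (0 : Fin a → ℝ) w) '' Q)

/-- Product `P × Q = {(x,y) | x ∈ P, y ∈ Q}`. -/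
def prodPoly {a b : ℕ} (P : Set (Fin a → ℝ)) (Q : Set (Fin b → ℝ)) :
    Set (Fin (a + b) → ℝ) :=
  {z | ∃ x ∈ P, ∃ y ∈ Q, z = Fin.append x y}

/-- Lattice equivalence: `Q = A · P` with `A ∈ GL_d(ℤ)`. -/
def LatticeEquiv {d : ℕ} (P Q : Set (Fin d → ℝ)) : Prop :=
  ∃ A : Matrix (Fin d) (Fin d) ℤ, IsUnit A.det ∧
    Q = (fun x => (A.map (Int.cast : ℤ → ℝ)).mulVec x) '' P

/-- Affine unimodular equivalence: `Q = A · P + t` with `A ∈ GL_d(ℤ)`, `t ∈ ℤ^d`. -/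
def AffineLatticeEquiv {d : ℕ} (P Q : Set (Fin d → ℝ)) : Prop :=
  ∃ (A : Matrix (Fin d) (Fin d) ℤ) (t : Fin d → ℤ), IsUnit A.det ∧
    Q = (fun x => (A.map (Int.cast : ℤ → ℝ)).mulVec x + fun i => (t i : ℝ)) '' P

/-- Combinatorial isomorphism: an inclusion-preserving bijection of face lattices. -/
def CombIso {n : ℕ} (P Q : Set (Fin n → ℝ)) : Prop :=
  ∃ φ : {F : Set (Fin n → ℝ) // IsFace P F} ≃ {F : Set (Fin n → ℝ) // IsFace Q F},
    ∀ F G, F.1 ⊆ G.1 ↔ (φ F).1 ⊆ (φ G).1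

/-!
The polar dual of `conv V` is the polar dual of the finite set `V`, i.e. the polyhedron
`{v | ⟨v, x⟩ ≤ 1, x ∈ V}`. It is closed and convex, it contains the open neighbourhood
`{v | ⟨v, x⟩ < 1, x ∈ V}` of `0`, and it is bounded because `P` contains a ball around `0`.
A polyhedron has finitely many extreme points, since an extreme point is cut out by its active
constraints; so by Krein–Milman the compact polar dual is the convex hull of finitely many points.
-/

open Filter Topology Matrix

section Polyhedron

variable {E ι : Type*} [AddCommGroup E] [Module ℝ E]

def polyhedron (f : ι → Module.Dual ℝ E) (b : ι → ℝ) : Set E :=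
  {v | ∀ i, f i v ≤ b i}

theorem convex_polyhedron (f : ι → Module.Dual ℝ E) (b : ι → ℝ) :
    Convex ℝ (polyhedron f b) := by
  simp only [polyhedron, ofPred_forall]
  exact convex_iInter fun i => convex_halfSpace_le (f i).isLinear (b i)

theorem isClosed_polyhedron [TopologicalSpace E] {f : ι → Module.Dual ℝ E}
    (hf : ∀ i, Continuous (f i)) (b : ι → ℝ) : IsClosed (polyhedron f b) := by
  simp only [polyhedron, ofPred_forall]
  exact isClosed_iInter fun i => isClosed_le (hf i) continuous_const

theorem zero_mem_interior_polyhedron [TopologicalSpace E] [Finite ι] {f : ι → Module.Dual ℝ E}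
    (hf : ∀ i, Continuous (f i)) {b : ι → ℝ} (hb : ∀ i, 0 < b i) :
    (0 : E) ∈ interior (polyhedron f b) := by
  have hopen : IsOpen {v : E | ∀ i, f i v < b i} := by
    simp only [ofPred_forall]
    exact isOpen_iInter_of_finite fun i => isOpen_lt (hf i) continuous_const
  have hsub : {v : E | ∀ i, f i v < b i} ⊆ polyhedron f b := fun v hv i => (hv i).le
  refine interior_mono hsub ?_
  rw [IsOpen.interior_eq hopen]
  simpa using hb

theorem eventually_add_smul_mem_polyhedron [Finite ι] {f : ι → Module.Dual ℝ E} {b : ι → ℝ}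
    {v u : E} (hv : v ∈ polyhedron f b) (hu : ∀ i, f i v = b i → f i u = 0) :
    ∀ᶠ t : ℝ in 𝓝 0, v + t • u ∈ polyhedron f b := by
  refine Filter.eventually_all.2 fun i => ?_
  simp only [map_add, map_smul, smul_eq_mul]
  rcases (hv i).eq_or_lt with hact | hlt
  · exact Filter.Eventually.of_forall fun t => by simp [hact, hu i hact]
  · have hcont : Continuous fun t : ℝ => f i v + t * f i u := by fun_prop
    exact (hcont.tendsto' 0 _ (by simp)).eventually (gt_mem_nhds hlt) |>.mono fun _ => le_of_lt

theorem eq_zero_of_mem_extremePoints_polyhedron [Finite ι] {f : ι → Module.Dual ℝ E}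
    {b : ι → ℝ} {v u : E} (hv : v ∈ (polyhedron f b).extremePoints ℝ)
    (hu : ∀ i, f i v = b i → f i u = 0) : u = 0 := by
  obtain ⟨ε, hε, hball⟩ :=
    Metric.eventually_nhds_iff.1 (eventually_add_smul_mem_polyhedron hv.1 hu)
  have hpos : v + (ε / 2) • u ∈ polyhedron f b := hball (by simp [abs_of_pos hε]; linarith)
  have hneg : v - (ε / 2) • u ∈ polyhedron f b := by
    simpa [sub_eq_add_neg] using hball (y := -(ε / 2)) (by simp [abs_of_pos hε]; linarith)
  have hseg := (mem_extremePoints.1 hv).2 _ hneg _ hpos (mem_openSegment_sub_add _ _)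
  simpa [hε.ne'] using hseg.1

/-- An extreme point is determined by its set of active constraints. -/
theorem finite_extremePoints_polyhedron [Finite ι] (f : ι → Module.Dual ℝ E) (b : ι → ℝ) :
    ((polyhedron f b).extremePoints ℝ).Finite := by
  refine Set.Finite.of_finite_image (f := fun v => {i | f i v = b i}) (Set.toFinite _) ?_
  intro v hv w hw hvw
  have hact : ∀ i, f i v = b i → f i w = b i := fun i => (Set.ext_iff.1 hvw i).1
  refine sub_eq_zero.1 (eq_zero_of_mem_extremePoints_polyhedron hv fun i hi => ?_)
  rw [map_sub, hi, hact i hi, sub_self]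

end Polyhedron

theorem convexHull_extremePoints_eq_of_finite {E : Type*} [AddCommGroup E] [Module ℝ E]
    [TopologicalSpace E] [T2Space E] [IsTopologicalAddGroup E] [ContinuousSMul ℝ E]
    [LocallyConvexSpace ℝ E] {K : Set E} (hK : IsCompact K) (hKc : Convex ℝ K)
    (hfin : (K.extremePoints ℝ).Finite) : convexHull ℝ (K.extremePoints ℝ) = K := by
  rw [← (hfin.isClosed_convexHull ℝ).closure_eq]
  exact closure_convexHull_extremePoints hK hKc

section PolarDual

variable {d : ℕ}

theorem polarDual_convexHull (s : Set (Fin d → ℝ)) :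
    polarDual (convexHull ℝ s) = polarDual s := by
  refine Subset.antisymm (fun v hv x hx => hv x (subset_convexHull ℝ s hx)) fun v hv => ?_
  exact convexHull_min hv (convex_halfSpace_le ((dotProductBilin ℝ ℝ v).isLinear) 1)

theorem polarDual_eq_polyhedron (s : Set (Fin d → ℝ)) :
    polarDual s = polyhedron (fun x : s => (dotProductBilin ℝ ℝ).flip x) 1 := by
  ext v
  simp [polarDual, polyhedron, dotp, dotProduct]

theorem isBounded_polarDual {P : Set (Fin d → ℝ)} (h0 : (0 : Fin d → ℝ) ∈ interior P) :
    Bornology.IsBounded (polarDual P) := by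
  obtain ⟨ε, hε, hball⟩ := Metric.mem_nhds_iff.1 (mem_interior_iff_mem_nhds.1 h0)
  refine (Metric.isBounded_closedBall (x := 0) (r := 2 / ε)).subset fun v hv => ?_
  have hcoord : ∀ i, ∀ a : ℝ, |a| = ε / 2 → v i * a ≤ 1 := fun i a ha => by
    have := hv (Pi.single i a) (hball (by simp [Pi.norm_single, ha, hε]))
    rwa [dotp, ← dotProduct, dotProduct_single] at this
  rw [Metric.mem_closedBall, dist_zero_right, pi_norm_le_iff_of_nonneg (by positivity)]
  intro i
  have h1 := hcoord i (ε / 2) (abs_of_pos (by positivity))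
  have h2 := hcoord i (-(ε / 2)) (by rw [abs_neg, abs_of_pos (by positivity)])
  rw [Real.norm_eq_abs, le_div_iff₀ hε]
  rcases abs_cases (v i) with ⟨habs, _⟩ | ⟨habs, _⟩ <;> rw [habs] <;> linarith

end PolarDual

/-- The polar dual of a polytope with `0` in its interior is again a polytope
with `0` in its interior. -/
theorem stmt1 {d : ℕ} (P : Set (Fin d → ℝ)) (hP : IsPolytope P)
    (h0 : (0 : Fin d → ℝ) ∈ interior P) :
    IsPolytope (polarDual P) ∧ (0 : Fin d → ℝ) ∈ interior (polarDual P) := by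
  obtain ⟨V, rfl⟩ := hP
  have hbdd := isBounded_polarDual h0
  rw [polarDual_convexHull, polarDual_eq_polyhedron] at hbdd ⊢
  have hcont : ∀ x : (V : Set (Fin d → ℝ)), Continuous ((dotProductBilin ℝ ℝ).flip x.1) :=
    fun _ => LinearMap.continuous_of_finiteDimensional _
  have hcompact := Metric.isCompact_of_isClosed_isBounded (isClosed_polyhedron hcont 1) hbdd
  have hfin := finite_extremePoints_polyhedron (fun x : (V : Set (Fin d → ℝ)) =>
    (dotProductBilin ℝ ℝ).flip x.1) 1
  refine ⟨⟨hfin.toFinset, ?_⟩, zero_mem_interior_polyhedron hcont fun _ => one_pos⟩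
  rw [hfin.coe_toFinset,
    convexHull_extremePoints_eq_of_finite hcompact (convex_polyhedron _ _) hfin]
end
end

section
/- Let P ⊆ ℝ^d be a smooth Fano polytope and v a vertex of P, with v̄ = (v,0) ∈ ℝ^{d+1}. Then the smooth skew bipyramid sbip(P,v) := conv((P × {0}) ∪ {−e_{d+1}, v̄ + e_{d+1}}) is again a smooth Fano polytope. -/
open Set

noncomputable section

/-!
A facet `F` of `sbip(P, v)` is cut out by some `c ⬝ᵥ x ≤ b`, with `b > 0` because `0` is an
interior point. Being an exposed face of a convex hull, `F` is the convex hull of the generators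
on which `c ⬝ᵥ x = b`. The two apices add up to `v̄ ∈ sbip(P, v)`, so at most one of them lies on
`F`, and the base points alone only span a face `G` of `P` of dimension at most `d - 1`. Hence
`F` is the pyramid over a facet `G` of `P` with apex `-e_{d+1}` or `v̄ + e_{d+1}`; its vertices
are those of `G × {0}` and the apex, and because the apex has last coordinate `±1`, it extends
the `ℤ`-basis of `ℤᵈ` formed by the vertices of `G` to a `ℤ`-basis of `ℤᵈ⁺¹`.
-/

open Filter Topology

section LinearFunctional

variable {E : Type*} [AddCommGroup E] [Module ℝ E] {f : E →ₗ[ℝ] ℝ} {b : ℝ}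

theorem isExtreme_sep_of_forall_le {A : Set E} (h : ∀ x ∈ A, f x ≤ b) :
    IsExtreme ℝ A {x ∈ A | f x = b} := by
  refine ⟨sep_subset _ _, fun x₁ h₁ x₂ h₂ x ⟨_, hx⟩ ⟨a₁, a₂, ha₁, ha₂, hsum, hcomb⟩ => ⟨h₁, ?_⟩⟩
  have h₁' := h x₁ h₁
  have h₂' := h x₂ h₂
  rw [← hcomb, map_add, map_smul, map_smul, smul_eq_mul, smul_eq_mul] at hx
  have hslack : a₁ * (b - f x₁) + a₂ * (b - f x₂) = 0 := by linear_combination b * hsum - hx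
  refine le_antisymm h₁' ?_
  nlinarith [mul_nonneg ha₂.le (sub_nonneg.2 h₂')]

/-- If `f ≤ b` on `S`, then `f = b` at a convex combination of points of `S` only if it does so
at every point carrying positive weight. -/
theorem convexHull_sep_eq_of_forall_le {S : Set E} (h : ∀ x ∈ S, f x ≤ b) :
    {x ∈ convexHull ℝ S | f x = b} = convexHull ℝ {x ∈ S | f x = b} := by
  refine Subset.antisymm ?_ fun x hx =>
    ⟨convexHull_mono (sep_subset _ _) hx,
      convexHull_min (fun y hy => hy.2) (convex_hyperplane f.isLinear b) hx⟩
  rintro x ⟨hx, hfx⟩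
  classical
  obtain ⟨ι, t, w, z, hw₀, hw₁, hz, rfl⟩ := (convexHull_eq S).subset hx
  rw [Finset.centerMass_eq_of_sum_1 _ _ hw₁, map_sum] at hfx
  have hslack : ∑ i ∈ t, w i * (b - f (z i)) = 0 := by
    simp only [mul_sub, Finset.sum_sub_distrib, ← Finset.sum_mul, hw₁, one_mul, ← hfx,
      map_smul, smul_eq_mul, sub_self]
  have hzero := (Finset.sum_eq_zero_iff_of_nonneg fun i hi =>
    mul_nonneg (hw₀ i hi) (sub_nonneg.2 (h _ (hz i hi)))).1 hslack
  rw [← Finset.centerMass_filter_ne_zero]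
  refine Finset.centerMass_mem_convexHull _ (fun i hi => hw₀ i (Finset.mem_filter.1 hi).1)
    (by rw [Finset.sum_filter_ne_zero, hw₁]; exact one_pos) fun i hi => ?_
  obtain ⟨hi, hwi⟩ := Finset.mem_filter.1 hi
  exact ⟨hz i hi, (sub_eq_zero.1 ((mul_eq_zero.1 (hzero i hi)).resolve_left hwi)).symm⟩

theorem isExtreme_convexHull_sep_of_forall_le {S : Set E} (h : ∀ x ∈ S, f x ≤ b) :
    IsExtreme ℝ (convexHull ℝ S) (convexHull ℝ {x ∈ S | f x = b}) :=
  convexHull_sep_eq_of_forall_le h ▸ isExtreme_sep_of_forall_le fun _ hx =>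
    convexHull_min h (convex_halfSpace_le f.isLinear b) hx

theorem extremePoints_image_of_injective {F : Type*} [AddCommGroup F] [Module ℝ F]
    {g : E →ₗ[ℝ] F} (hg : Function.Injective g) (s : Set E) :
    (g '' s).extremePoints ℝ = g '' s.extremePoints ℝ := by
  have hseg : ∀ x x₁ x₂, g x ∈ openSegment ℝ (g x₁) (g x₂) ↔ x ∈ openSegment ℝ x₁ x₂ :=
    fun x x₁ x₂ => by
      have := image_openSegment ℝ g.toAffineMap x₁ x₂
      rw [LinearMap.coe_toAffineMap] at this
      rw [← this, hg.mem_set_image]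
  ext y
  constructor
  · rintro ⟨⟨x, hx, rfl⟩, hext⟩
    exact ⟨x, ⟨hx, fun x₁ h₁ x₂ h₂ h =>
      hg (hext (mem_image_of_mem g h₁) (mem_image_of_mem g h₂) ((hseg x x₁ x₂).2 h))⟩, rfl⟩
  · rintro ⟨x, ⟨hx, hext⟩, rfl⟩
    refine ⟨mem_image_of_mem g hx, ?_⟩
    rintro _ ⟨x₁, h₁, rfl⟩ _ ⟨x₂, h₂, rfl⟩ h
    exact congrArg g (hext h₁ h₂ ((hseg x x₁ x₂).1 h))

end LinearFunctional

section Faces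

variable {n : ℕ}

theorem dotp_eq_dotProduct (c x : Fin n → ℝ) : dotp c x = c ⬝ᵥ x := rfl

theorem IsFace.convex {P F : Set (Fin n → ℝ)} (hF : IsFace P F) (hP : Convex ℝ P) :
    Convex ℝ F := by
  obtain ⟨c, b, -, rfl⟩ := hF
  exact hP.inter (convex_hyperplane (dotProductBilin ℝ ℝ c).isLinear b)

theorem pos_of_sep_ne {C : Set (Fin n → ℝ)} (h0 : (0 : Fin n → ℝ) ∈ interior C)
    {c : Fin n → ℝ} {b : ℝ} (hle : ∀ x ∈ C, dotp c x ≤ b) (hne : {x ∈ C | dotp c x = b} ≠ C) :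
    0 < b := by
  have hb : 0 ≤ b := by simpa [dotp_eq_dotProduct] using hle 0 (interior_subset h0)
  refine hb.lt_of_ne fun hb0 => hne ?_
  subst hb0
  -- `C` contains a small positive multiple of `c`, on which `dotp c` is positive unless `c = 0`
  have hray : ∀ᶠ t in 𝓝[>] (0 : ℝ), t • c ∈ C := nhdsWithin_le_nhds <|
    (continuous_id.smul continuous_const).tendsto' 0 0 (zero_smul ℝ c)
      (mem_interior_iff_mem_nhds.1 h0)
  obtain ⟨t, htC, ht⟩ := (hray.and self_mem_nhdsWithin).exists
  have hcc : c ⬝ᵥ c ≤ 0 := by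
    have := hle _ htC
    rw [dotp_eq_dotProduct, dotProduct_smul, smul_eq_mul] at this
    exact nonpos_of_mul_nonpos_right this ht
  have hc : c = 0 := dotProduct_self_eq_zero.1 (le_antisymm hcc (dotProduct_self_star_nonneg c))
  ext x
  simp [hc, dotp_eq_dotProduct]

theorem fdim_le (s : Set (Fin n → ℝ)) : fdim s ≤ n :=
  (Submodule.finrank_le (vectorSpan ℝ s)).trans_eq (Module.finrank_fin_fun ℝ)

theorem fdim_convexHull (s : Set (Fin n → ℝ)) : fdim (convexHull ℝ s) = fdim s := by
  rw [fdim, fdim, ← direction_affineSpan, affineSpan_convexHull, direction_affineSpan]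

theorem fdim_insert_le (s : Set (Fin n → ℝ)) (x : Fin n → ℝ) : fdim (insert x s) ≤ fdim s + 1 :=
  finrank_vectorSpan_insert_le_set ℝ s x

theorem fdim_image_of_injective {m : ℕ} {g : (Fin m → ℝ) →ₗ[ℝ] (Fin n → ℝ)}
    (hg : Function.Injective g) (s : Set (Fin m → ℝ)) : fdim (g '' s) = fdim s := by
  rw [fdim, fdim, ← LinearMap.coe_toAffineMap, ← AffineMap.map_vectorSpan]
  exact (LinearEquiv.finrank_eq (Submodule.equivMapOfInjective g hg _)).symm

theorem fdim_eq_of_mem_interior {C : Set (Fin n → ℝ)} {x : Fin n → ℝ} (hx : x ∈ interior C) :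
    fdim C = n := by
  have hspan : affineSpan ℝ C = ⊤ :=
    affineSpan_eq_top_of_nonempty_interior ⟨x, interior_mono (subset_convexHull ℝ C) hx⟩
  rw [fdim, ← direction_affineSpan, hspan, AffineSubspace.direction_top, finrank_top,
    Module.finrank_fin_fun]

/-- If `G` spanned `ℝⁿ` affinely, its vector span would contain the points of `G`, on which
`dotp c` would then vanish. -/
theorem fdim_le_pred_of_dotp_eq {G : Set (Fin n → ℝ)} {c : Fin n → ℝ} {b : ℝ} (hb : b ≠ 0)
    (hG : ∀ y ∈ G, dotp c y = b) : fdim G ≤ n - 1 := by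
  rcases G.eq_empty_or_nonempty with rfl | ⟨y, hy⟩
  · rw [fdim, vectorSpan_empty, finrank_bot]
    exact Nat.zero_le _
  suffices fdim G ≠ n by have := fdim_le G; omega
  intro hdim
  have htop : vectorSpan ℝ G = ⊤ :=
    Submodule.eq_top_of_finrank_eq (by rw [Module.finrank_fin_fun]; exact hdim)
  have hker : vectorSpan ℝ G ≤ LinearMap.ker (dotProductBilin ℝ ℝ c) := by
    rw [vectorSpan_def, Submodule.span_le]
    rintro _ ⟨y₁, h₁, y₂, h₂, rfl⟩
    have := (hG y₁ h₁).trans (hG y₂ h₂).symm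
    rw [dotp_eq_dotProduct, dotp_eq_dotProduct] at this
    simp [dotProduct_sub, this]
  have := hker (htop ▸ Submodule.mem_top : y ∈ vectorSpan ℝ G)
  exact hb ((hG y hy).symm.trans this)

end Faces

section Lattice

variable {d : ℕ}

def latticePoints (d : ℕ) : Submodule ℤ (Fin d → ℝ) where
  carrier := {x | IsLatticePt x}
  add_mem' {x y} hx hy i := by
    obtain ⟨m, hm⟩ := hx i
    obtain ⟨k, hk⟩ := hy i
    exact ⟨m + k, by simp [hm, hk]⟩
  zero_mem' _ := ⟨0, by simp⟩
  smul_mem' k x hx i := by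
    obtain ⟨m, hm⟩ := hx i
    exact ⟨k * m, by simp [hm]⟩

theorem mem_latticeSubmodule {x : Fin d → ℝ} : x ∈ latticeSubmodule d ↔ IsLatticePt x := by
  rw [latticeSubmodule, show {x : Fin d → ℝ | IsLatticePt x} = latticePoints d from rfl,
    Submodule.span_eq]
  rfl

theorem isLatticePt_zero : IsLatticePt (0 : Fin d → ℝ) := fun _ => ⟨0, by simp⟩

theorem IsLatticePt.snoc {x : Fin d → ℝ} (hx : IsLatticePt x) {t : ℝ} (ht : ∃ k : ℤ, t = k) :
    IsLatticePt (Fin.snoc x t : Fin (d + 1) → ℝ) :=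
  fun i => Fin.lastCases (by simpa using ht) (fun j => by simpa using hx j) i

end Lattice

section Pyramid

variable {d : ℕ}

def snocZero (d : ℕ) : (Fin d → ℝ) →ₗ[ℝ] (Fin (d + 1) → ℝ) where
  toFun x := Fin.snoc x 0
  map_add' x y := by
    ext i
    refine Fin.lastCases ?_ (fun j => ?_) i <;> simp
  map_smul' a x := by
    ext i
    refine Fin.lastCases ?_ (fun j => ?_) i <;> simp

theorem snocZero_apply (x : Fin d → ℝ) : snocZero d x = Fin.snoc x 0 := rfl

theorem snocZero_injective : Function.Injective (snocZero d) := fun x y h => by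
  simpa [snocZero_apply] using congrArg Fin.init h

theorem dotp_snocZero (c : Fin (d + 1) → ℝ) (y : Fin d → ℝ) :
    dotp c (snocZero d y) = dotp (Fin.init c) y := by
  simp [dotp, snocZero_apply, Fin.sum_univ_castSucc, Fin.init]

def pyramid (G : Set (Fin d → ℝ)) (α : Fin (d + 1) → ℝ) : Set (Fin (d + 1) → ℝ) :=
  convexHull ℝ (insert α (snocZero d '' G))

theorem fdim_pyramid_le (G : Set (Fin d → ℝ)) (α : Fin (d + 1) → ℝ) :
    fdim (pyramid G α) ≤ fdim G + 1 := by
  rw [pyramid, fdim_convexHull, ← fdim_image_of_injective snocZero_injective G]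
  exact fdim_insert_le _ _

/-- Both the apex and the base are faces of the pyramid, cut out by the height functional. -/
theorem extremePoints_pyramid {G : Set (Fin d → ℝ)} (hG : Convex ℝ G) {α : Fin (d + 1) → ℝ}
    (hα : α (Fin.last d) ≠ 0) :
    (pyramid G α).extremePoints ℝ = insert α (snocZero d '' G.extremePoints ℝ) := by
  set height : (Fin (d + 1) → ℝ) →ₗ[ℝ] ℝ := (α (Fin.last d))⁻¹ • LinearMap.proj (Fin.last d)
  have hα1 : height α = 1 := by simp [height, hα]
  have hbase0 : ∀ y, height (snocZero d y) = 0 := by simp [height, snocZero_apply]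
  have hapex : IsExtreme ℝ (pyramid G α) {α} := by
    have hle : ∀ x ∈ insert α (snocZero d '' G), height x ≤ 1 := by
      rintro _ (rfl | ⟨y, -, rfl⟩) <;> simp [hα1, hbase0]
    have hsep : {x ∈ insert α (snocZero d '' G) | height x = 1} = {α} := by
      ext x
      refine ⟨fun ⟨hx, h1⟩ => hx.resolve_right ?_, fun hx => ⟨Or.inl hx, hx ▸ hα1⟩⟩
      rintro ⟨y, -, rfl⟩
      simp [hbase0] at h1
    have := isExtreme_convexHull_sep_of_forall_le hle
    rwa [hsep, convexHull_singleton] at this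
  have hbase : IsExtreme ℝ (pyramid G α) (snocZero d '' G) := by
    have hle : ∀ x ∈ insert α (snocZero d '' G), (-height) x ≤ 0 := by
      rintro _ (rfl | ⟨y, -, rfl⟩) <;> simp [hα1, hbase0]
    have hsep : {x ∈ insert α (snocZero d '' G) | (-height) x = 0} = snocZero d '' G := by
      ext x
      refine ⟨fun ⟨hx, h0⟩ => hx.resolve_left ?_, fun hx => ⟨Or.inr hx, ?_⟩⟩
      · rintro rfl
        simp [hα1] at h0
      · obtain ⟨y, -, rfl⟩ := hx
        simp [hbase0]
    have := isExtreme_convexHull_sep_of_forall_le hle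
    rwa [hsep, (hG.linear_image (snocZero d)).convexHull_eq] at this
  have hbase_ext := hbase.extremePoints_eq
  rw [extremePoints_image_of_injective snocZero_injective] at hbase_ext
  ext x
  refine ⟨fun hx => ?_, ?_⟩
  · rcases extremePoints_convexHull_subset hx with rfl | hxG
    · exact mem_insert _ _
    · exact mem_insert_of_mem _ (hbase_ext ▸ ⟨hxG, hx⟩)
  · rintro (rfl | hx)
    · exact isExtreme_singleton.1 hapex
    · exact (hbase_ext ▸ hx).2

theorem IsLatticeBasisSet.insert_snocZero {B : Set (Fin d → ℝ)} (hB : IsLatticeBasisSet B)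
    {α : Fin (d + 1) → ℝ} (hα : IsLatticePt α)
    (hlast : α (Fin.last d) = 1 ∨ α (Fin.last d) = -1) :
    IsLatticeBasisSet (insert α (snocZero d '' B)) := by
  obtain ⟨hli, hspan⟩ := hB
  replace hli : LinearIndepOn ℝ id B := hli
  have hsq : α (Fin.last d) * α (Fin.last d) = 1 := by rcases hlast with h | h <;> simp [h]
  have hB_lattice : ∀ b ∈ B, IsLatticePt b := fun b hb =>
    mem_latticeSubmodule.1 (hspan ▸ Submodule.subset_span hb)
  constructor
  · refine LinearIndepOn.id_insert (hli.image ?_) fun hmem => ?_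
    · rw [LinearMap.ker_eq_bot.2 snocZero_injective]
      exact disjoint_bot_right
    · have hbase : snocZero d '' B ⊆ LinearMap.range (snocZero d) := fun _ ⟨y, _, hy⟩ => ⟨y, hy⟩
      obtain ⟨y, hy⟩ := Submodule.span_le.2 hbase hmem
      have := congrFun hy (Fin.last d)
      rw [snocZero_apply, Fin.snoc_last] at this
      simp [← this] at hsq
  refine le_antisymm (Submodule.span_le.2 ?_) fun x hx => ?_
  · rintro _ (rfl | ⟨b, hb, rfl⟩)
    · exact mem_latticeSubmodule.2 hα
    · exact mem_latticeSubmodule.2 ((hB_lattice b hb).snoc ⟨0, by simp⟩)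
  -- subtract the right integer multiple of `α` to land in the hyperplane `ℤᵈ × {0}`
  obtain ⟨m, hm⟩ := mem_latticeSubmodule.1 hx (Fin.last d)
  obtain ⟨s, hs⟩ := hα (Fin.last d)
  set z := x - (m * s) • α with hz
  have hz_mem : z ∈ latticeSubmodule (d + 1) :=
    sub_mem hx (Submodule.smul_mem _ _ (mem_latticeSubmodule.2 hα))
  have hz_last : z (Fin.last d) = 0 := by
    rw [hz, Pi.sub_apply, Pi.smul_apply, zsmul_eq_mul, Int.cast_mul, hm, hs, mul_assoc,
      ← hs, hsq, mul_one, sub_self]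
  have hz_init : Fin.init z ∈ Submodule.span ℤ B := by
    rw [hspan, mem_latticeSubmodule]
    exact fun j => mem_latticeSubmodule.1 hz_mem j.castSucc
  have hz_base : z ∈ Submodule.span ℤ (snocZero d '' B) := by
    rw [show (snocZero d : _ → _) = (snocZero d).restrictScalars ℤ from rfl, Submodule.span_image]
    exact ⟨Fin.init z, hz_init, by simp [snocZero_apply, ← hz_last]⟩
  rw [show x = z + (m * s) • α by rw [hz, sub_add_cancel]]
  exact add_mem (Submodule.span_mono (subset_insert _ _) hz_base)
    (Submodule.smul_mem _ _ (Submodule.subset_span (mem_insert _ _)))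

end Pyramid

section SkewBipyramid

variable {d : ℕ} {P : Set (Fin d → ℝ)} {v : Fin d → ℝ}

/-- `sbip(P, v)`; its apices are `-e_{d+1} = snoc 0 (-1)` and `v̄ + e_{d+1} = snoc v 1`. -/
def skewBipyramid (P : Set (Fin d → ℝ)) (v : Fin d → ℝ) : Set (Fin (d + 1) → ℝ) :=
  convexHull ℝ (snocZero d '' P ∪ {Fin.snoc 0 (-1), Fin.snoc v 1})

theorem snocZero_mem_skewBipyramid {y : Fin d → ℝ} (hy : y ∈ P) :
    snocZero d y ∈ skewBipyramid P v :=
  subset_convexHull ℝ _ (Or.inl (mem_image_of_mem _ hy))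

theorem isLatticePolytope_skewBipyramid (hP : IsLatticePolytope P) (hv : IsLatticePt v) :
    IsLatticePolytope (skewBipyramid P v) := by
  classical
  obtain ⟨V, hV, rfl⟩ := hP
  refine ⟨V.image (snocZero d) ∪ {Fin.snoc 0 (-1), Fin.snoc v 1}, ?_, ?_⟩
  · simp only [Finset.mem_union, Finset.mem_image, Finset.mem_insert, Finset.mem_singleton]
    rintro _ (⟨x, hx, rfl⟩ | rfl | rfl)
    · exact (hV x hx).snoc ⟨0, by simp⟩
    · exact isLatticePt_zero.snoc ⟨-1, by simp⟩
    · exact hv.snoc ⟨1, by simp⟩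
  · rw [skewBipyramid, LinearMap.image_convexHull, convexHull_convexHull_union_left]
    push_cast
    rfl

theorem zero_mem_interior_skewBipyramid (h0 : (0 : Fin d → ℝ) ∈ interior P) (v : Fin d → ℝ) :
    (0 : Fin (d + 1) → ℝ) ∈ interior (skewBipyramid P v) := by
  -- `x` lies on the segment from the upper apex to `snoc (up x) 0`, or from the lower apex
  -- to `snoc (down x) 0`, and both base points tend to `0` as `x → 0`.
  let up (x : Fin (d + 1) → ℝ) : Fin d → ℝ :=
    (1 - x (Fin.last d))⁻¹ • (Fin.init x - x (Fin.last d) • v)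
  let down (x : Fin (d + 1) → ℝ) : Fin d → ℝ := (1 + x (Fin.last d))⁻¹ • Fin.init x
  have hlast_cont : Continuous fun x : Fin (d + 1) → ℝ => x (Fin.last d) := continuous_apply _
  have hinit0 : Fin.init (0 : Fin (d + 1) → ℝ) = 0 := rfl
  have hup : Tendsto up (𝓝 0) (𝓝 0) := by
    have : ContinuousAt up 0 :=
      ((continuous_const.sub hlast_cont).continuousAt.inv₀ (by simp)).smul
        (by fun_prop :
          Continuous fun x : Fin (d + 1) → ℝ => Fin.init x - x (Fin.last d) • v).continuousAt
    simpa [up, hinit0] using this.tendsto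
  have hdown : Tendsto down (𝓝 0) (𝓝 0) := by
    have : ContinuousAt down 0 :=
      ((continuous_const.add hlast_cont).continuousAt.inv₀ (by simp)).smul
        (by fun_prop : Continuous fun x : Fin (d + 1) → ℝ => Fin.init x).continuousAt
    simpa [down, hinit0] using this.tendsto
  have hlast : ∀ᶠ x in 𝓝 (0 : Fin (d + 1) → ℝ), x (Fin.last d) ∈ Ioo (-1 : ℝ) 1 :=
    hlast_cont.continuousAt.eventually (Ioo_mem_nhds (by norm_num) (by norm_num))
  have hP : P ∈ 𝓝 0 := mem_interior_iff_mem_nhds.1 h0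
  have hQ : Convex ℝ (skewBipyramid P v) := convex_convexHull ℝ _
  have hlower : Fin.snoc 0 (-1) ∈ skewBipyramid P v := subset_convexHull ℝ _ (by simp)
  have hupper : Fin.snoc v 1 ∈ skewBipyramid P v := subset_convexHull ℝ _ (by simp)
  rw [mem_interior_iff_mem_nhds]
  filter_upwards [hup hP, hdown hP, hlast] with x hxup hxdown ⟨hx₁, hx₂⟩
  rcases le_total 0 (x (Fin.last d)) with ht | ht
  · convert hQ hupper (snocZero_mem_skewBipyramid hxup) ht (by linarith : 0 ≤ 1 - x (Fin.last d))
      (by ring) using 1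
    ext i
    refine Fin.lastCases ?_ (fun j => ?_) i
    · simp [snocZero_apply]
    · simp [snocZero_apply, up, Fin.init]
      field_simp
      ring
  · convert hQ hlower (snocZero_mem_skewBipyramid hxdown) (by linarith : 0 ≤ -x (Fin.last d))
      (by linarith : 0 ≤ 1 + x (Fin.last d)) (by ring) using 1
    ext i
    refine Fin.lastCases ?_ (fun j => ?_) i
    · simp [snocZero_apply]
    · have : 1 + x (Fin.last d) ≠ 0 := by linarith
      simp [snocZero_apply, down, Fin.init]
      field_simp

theorem sep_skewBipyramid_eq {c : Fin (d + 1) → ℝ} {b : ℝ}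
    (hle : ∀ x ∈ skewBipyramid P v, dotp c x ≤ b) :
    {x ∈ skewBipyramid P v | dotp c x = b} =
      convexHull ℝ (snocZero d '' {y ∈ P | dotp (Fin.init c) y = b} ∪
        {x ∈ ({Fin.snoc 0 (-1), Fin.snoc v 1} : Set (Fin (d + 1) → ℝ)) | dotp c x = b}) := by
  refine (convexHull_sep_eq_of_forall_le (f := dotProductBilin ℝ ℝ c)
    fun x hx => hle x (subset_convexHull ℝ _ hx)).trans (congrArg _ ?_)
  show {x ∈ snocZero d '' P ∪ _ | dotp c x = b} = _
  ext x
  constructor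
  · rintro ⟨⟨y, hy, rfl⟩ | hx, hxb⟩
    · exact Or.inl ⟨y, ⟨hy, by rwa [← dotp_snocZero]⟩, rfl⟩
    · exact Or.inr ⟨hx, hxb⟩
  · rintro (⟨y, ⟨hy, hyb⟩, rfl⟩ | ⟨hx, hxb⟩)
    · exact ⟨Or.inl ⟨y, hy, rfl⟩, by rwa [dotp_snocZero]⟩
    · exact ⟨Or.inr hx, hxb⟩

theorem exists_isFacet_eq_pyramid_of_isFacet_skewBipyramid (h0 : (0 : Fin d → ℝ) ∈ interior P)
    (hv : v ∈ P) (hd : 0 < d) {F : Set (Fin (d + 1) → ℝ)}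
    (hF : IsFacet (skewBipyramid P v) F) :
    ∃ G, IsFacet P G ∧ ∃ α ∈ ({Fin.snoc 0 (-1), Fin.snoc v 1} : Set (Fin (d + 1) → ℝ)),
      F = pyramid G α := by
  obtain ⟨⟨c, b, hle, rfl⟩, hdim⟩ := hF
  rw [Nat.add_sub_cancel] at hdim
  have hQ0 := zero_mem_interior_skewBipyramid h0 v
  have hb : 0 < b := pos_of_sep_ne hQ0 hle fun h => by
    rw [h, fdim_eq_of_mem_interior hQ0] at hdim
    omega
  rw [sep_skewBipyramid_eq hle] at hdim ⊢
  set G := {y ∈ P | dotp (Fin.init c) y = b}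
  have hGface : IsFace P G := ⟨Fin.init c, b, fun y hy => by
    simpa [dotp_snocZero] using hle _ (snocZero_mem_skewBipyramid hy), rfl⟩
  have hGdim : fdim G ≤ d - 1 := fdim_le_pred_of_dotp_eq hb.ne' fun y hy => hy.2
  set T := {x ∈ ({Fin.snoc 0 (-1), Fin.snoc v 1} : Set (Fin (d + 1) → ℝ)) | dotp c x = b}
  -- the two apices add up to `v̄ ∈ sbip(P, v)`, so they cannot both lie on a facet avoiding `0`
  have hT : T.Subsingleton := by
    have hsum : (Fin.snoc 0 (-1) + Fin.snoc v 1 : Fin (d + 1) → ℝ) = snocZero d v := by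
      ext i
      refine Fin.lastCases ?_ (fun j => ?_) i <;> simp [snocZero_apply]
    have hv' := hle _ (snocZero_mem_skewBipyramid (v := v) hv)
    rw [← hsum, dotp_eq_dotProduct, dotProduct_add, ← dotp_eq_dotProduct,
      ← dotp_eq_dotProduct] at hv'
    rintro x ⟨rfl | rfl, hx⟩ y ⟨rfl | rfl, hy⟩ <;> first | rfl | (exfalso; linarith)
  rcases hT.eq_empty_or_singleton with hT | ⟨α, hα⟩
  · rw [hT, union_empty, fdim_convexHull, fdim_image_of_injective snocZero_injective] at hdim
    omega
  · have hαT : α ∈ T := hα ▸ mem_singleton α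
    refine ⟨G, ⟨hGface, ?_⟩, α, hαT.1, ?_⟩
    · have := fdim_pyramid_le G α
      rw [pyramid, ← union_singleton, ← hα, hdim] at this
      omega
    · rw [hα, union_singleton, pyramid]

theorem pos_of_isSmoothFano (hP : IsSmoothFano P) : 0 < d := by
  obtain ⟨-, h0, hdim, hfacets⟩ := hP
  refine Nat.pos_of_ne_zero fun hd => ?_
  subst hd
  -- in dimension `0`, `P = {0}` is a facet of itself whose only vertex `0` is not independent
  have hPP : IsFacet P P :=
    ⟨⟨0, 0, fun _ _ => le_of_eq (by simp [dotp]), by ext; simp [dotp]⟩, hdim⟩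
  exact (hfacets P hPP).1.ne_zero ⟨0, by rw [extremePoints_eq_self]; exact interior_subset h0⟩ rfl

end SkewBipyramid

/-- The smooth skew bipyramid `sbip(P,v) = conv((P×{0}) ∪ {−e_{d+1}, v̄+e_{d+1}})`
over a smooth Fano polytope `P` at a vertex `v` is a smooth Fano polytope. -/
theorem stmt12 {d : ℕ} (P : Set (Fin d → ℝ)) (hP : IsSmoothFano P)
    (v : Fin d → ℝ) (hv : v ∈ Set.extremePoints ℝ P) :
    IsSmoothFano (convexHull ℝ
      ((fun x : Fin d → ℝ => Fin.snoc x (0 : ℝ)) '' P ∪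
        {Fin.snoc (0 : Fin d → ℝ) (-1 : ℝ), Fin.snoc v (1 : ℝ)})) := by
  have hd := pos_of_isSmoothFano hP
  obtain ⟨hlat, h0, -, hfacets⟩ := hP
  obtain ⟨V, hV, hPV⟩ := hlat
  have hconv : Convex ℝ P := hPV ▸ convex_convexHull ℝ _
  have hvZ : IsLatticePt v := hV v (extremePoints_convexHull_subset (hPV ▸ hv))
  have hQ0 := zero_mem_interior_skewBipyramid h0 v
  show IsSmoothFano (skewBipyramid P v)
  refine ⟨isLatticePolytope_skewBipyramid ⟨V, hV, hPV⟩ hvZ, hQ0, fdim_eq_of_mem_interior hQ0,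
    fun F hF => ?_⟩
  obtain ⟨G, hG, α, hα, rfl⟩ := exists_isFacet_eq_pyramid_of_isFacet_skewBipyramid h0 hv.1 hd hF
  have hαZ : IsLatticePt α ∧ (α (Fin.last d) = 1 ∨ α (Fin.last d) = -1) := by
    rcases hα with rfl | rfl
    · exact ⟨isLatticePt_zero.snoc ⟨-1, by simp⟩, by simp⟩
    · exact ⟨hvZ.snoc ⟨1, by simp⟩, by simp⟩
  rw [extremePoints_pyramid (hG.1.convex hconv) (by rcases hαZ.2 with h | h <;> simp [h])]
  exact (hfacets G hG).insert_snocZero hαZ.1 hαZ.2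
end
end
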